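/- Let α ∈ (ℝ_{≥0}^n)↓, d ≤ n, let γ ∈ (ℝ_{≥0}^d)↓ be the water-filling of α in dimension d, and let β ∈ ℝ_{≥0}^d with α ≺ β. Then γ ≺ β. That is, the water-filling is a ≺-minimal element among non-negative d-dimensional vectors majorizing α. -/
import Mathlib

noncomputable def decr {n : ℕ} (x : Fin n → ℝ) : Fin n → ℝ :=
  fun i => x (Tuple.sort x i.rev)

noncomputable def psum {n : ℕ} (x : Fin n → ℝ) (k : ℕ) : ℝ :=
  ∑ i ∈ Finset.univ.filter (fun i : Fin n => (i : ℕ) < k), x i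

lemma decr_antitone {m : ℕ} (x : Fin m → ℝ) : Antitone (decr x) := by
  intro i j hij
  exact Tuple.monotone_sort x (Fin.rev_le_rev.mpr hij)

lemma decr_eq_of_antitone {m : ℕ} {x : Fin m → ℝ} (hx : Antitone x) : decr x = x := by
  have hmono : Monotone (x ∘ (Fin.revPerm : Equiv.Perm (Fin m))) := by
    intro i j hij
    exact hx (by simpa using Fin.rev_le_rev.mpr hij)
  have h := Tuple.comp_sort_eq_comp_iff_monotone.mpr hmono
  funext i
  have := congrFun h i.rev
  simp only [Function.comp_apply, Fin.revPerm_apply, Fin.rev_rev] at this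
  simpa [decr] using this.symm

lemma sum_decr {m : ℕ} (x : Fin m → ℝ) : ∑ i, decr x i = ∑ i, x i := by
  have := Equiv.sum_comp ((Fin.revPerm : Equiv.Perm (Fin m)).trans (Tuple.sort x)) x
  simpa [decr] using this

lemma psum_zero {m : ℕ} (x : Fin m → ℝ) : psum x 0 = 0 := by
  simp [psum]

lemma psum_of_le {m : ℕ} (x : Fin m → ℝ) {k : ℕ} (hk : m ≤ k) : psum x k = ∑ i, x i := by
  unfold psum
  congr 1
  apply Finset.filter_true_of_mem
  intro i _
  exact lt_of_lt_of_le i.isLt hk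

lemma psum_succ {m : ℕ} (x : Fin m → ℝ) {k : ℕ} (hk : k < m) :
    psum x (k + 1) = psum x k + x ⟨k, hk⟩ := by
  unfold psum
  rw [show (Finset.univ.filter (fun i : Fin m => (i : ℕ) < k + 1))
      = insert ⟨k, hk⟩ (Finset.univ.filter (fun i : Fin m => (i : ℕ) < k)) by
    ext i
    simp [Fin.ext_iff]
    omega]
  rw [Finset.sum_insert (by simp)]
  ring

lemma psum_mono {m : ℕ} {x y : Fin m → ℝ} (h : ∀ i, x i ≤ y i) (k : ℕ) :
    psum x k ≤ psum y k :=
  Finset.sum_le_sum (fun i _ => h i)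

lemma psum_ge {m : ℕ} (x : Fin m → ℝ) (c : ℝ) (j t : ℕ) (h : j + t ≤ m)
    (hc : ∀ i : Fin m, (i : ℕ) < j + t → c ≤ x i) :
    psum x j + (t : ℝ) * c ≤ psum x (j + t) := by
  induction t with
  | zero => simp
  | succ t ih =>
    have hlt : j + t < m := by omega
    rw [show j + (t+1) = (j + t) + 1 by omega, psum_succ x hlt]
    have h1 := ih (by omega) (fun i hi => hc i (by omega))
    have h2 : c ≤ x ⟨j + t, hlt⟩ := hc _ (by show j+t < j+(t+1); omega)
    push_cast
    nlinarith

lemma psum_le {m : ℕ} (x : Fin m → ℝ) (c : ℝ) (k t : ℕ) (h : k + t ≤ m)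
    (hc : ∀ i : Fin m, k ≤ (i : ℕ) → x i ≤ c) :
    psum x (k + t) ≤ psum x k + (t : ℝ) * c := by
  induction t with
  | zero => simp
  | succ t ih =>
    have hlt : k + t < m := by omega
    rw [show k + (t+1) = (k + t) + 1 by omega, psum_succ x hlt]
    have h1 := ih (by omega)
    have h2 : x ⟨k + t, hlt⟩ ≤ c := hc _ (by simp)
    push_cast
    nlinarith

lemma psum_castLE {n d : ℕ} (hd : d ≤ n) (α : Fin n → ℝ) {j : ℕ} (hj : j ≤ d) :
    psum (fun i : Fin d => α (Fin.castLE hd i)) j = psum α j := by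
  induction j with
  | zero => simp [psum_zero]
  | succ j ih =>
    have hjd : j < d := by omega
    have hjn : j < n := by omega
    rw [psum_succ _ hjd, psum_succ α hjn, ih (by omega)]
    rfl

/-- `x` is submajorized by `y` : partial sums of the non-increasing
rearrangement of `x` are dominated by those of `y`. -/
def SubMaj {n d : ℕ} (x : Fin n → ℝ) (y : Fin d → ℝ) : Prop :=
  ∀ k : ℕ, psum (decr x) k ≤ psum (decr y) k

/-- majorization (allowing different lengths). -/
def Maj {n d : ℕ} (x : Fin n → ℝ) (y : Fin d → ℝ) : Prop :=
  SubMaj x y ∧ (∑ i, x i) = (∑ i, y i)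

/-- `γ` is the water-filling of `α` in dimension `d`, with water-level `c`. -/
def IsWaterFilling {n : ℕ} (d : ℕ) (hd0 : 0 < d) (hd : d ≤ n)
    (α : Fin n → ℝ) (c : ℝ) (γ : Fin d → ℝ) : Prop :=
  α ⟨d - 1, by omega⟩ ≤ c ∧
  (∑ i : Fin d, max (α (Fin.castLE hd i)) c) = (∑ i, α i) ∧
  ∀ i : Fin d, γ i = max (α (Fin.castLE hd i)) c

/-- The water-filling is ≺-minimal among nonnegative d-vectors majorizing α. -/
theorem stmt7 {n d : ℕ} (hd0 : 0 < d) (hd : d ≤ n)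
    (α : Fin n → ℝ) (hα : Antitone α) (hα0 : ∀ i, 0 ≤ α i)
    (c : ℝ) (γ : Fin d → ℝ) (hwf : IsWaterFilling d hd0 hd α c γ)
    (β : Fin d → ℝ) (hβ0 : ∀ i, 0 ≤ β i) (hmaj : Maj α β) :
    Maj γ β := by
  obtain ⟨hc1, hsum, hγ⟩ := hwf
  obtain ⟨hsub, htot⟩ := hmaj
  set A : Fin d → ℝ := fun i => α (Fin.castLE hd i) with hA
  have hAanti : Antitone A := fun i j hij => hα (show Fin.castLE hd i ≤ Fin.castLE hd j from hij)
  have hγM : γ = fun i => max (A i) c := funext hγ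
  have hγanti : Antitone γ := by
    rw [hγM]; exact fun i j hij => max_le_max (hAanti hij) le_rfl
  have hdγ : decr γ = γ := decr_eq_of_antitone hγanti
  have hdα : decr α = α := decr_eq_of_antitone hα
  set B : Fin d → ℝ := decr β with hB
  have hBanti : Antitone B := decr_antitone β
  have hBsum : ∑ i, B i = ∑ i, β i := sum_decr β
  have hsumγ : ∑ i, γ i = ∑ i, α i := by rw [hγM]; exact hsum
  have hαB : ∀ k, psum α k ≤ psum B k := by
    intro k; have := hsub k; rwa [hdα] at this
  have key : ∀ j, j ≤ d → psum A j + ((d - j : ℕ) : ℝ) * c ≤ ∑ i, α i := by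
    intro j hj
    have h1 : psum A j ≤ psum γ j :=
      psum_mono (fun i => by rw [hγ i]; exact le_max_left _ _) j
    have h2 : psum γ j + ((d - j : ℕ) : ℝ) * c ≤ psum γ (j + (d - j)) :=
      psum_ge γ c j (d - j) (by omega) (fun i _ => by rw [hγ i]; exact le_max_right _ _)
    rw [show j + (d - j) = d by omega, psum_of_le γ le_rfl, hsumγ] at h2
    linarith
  constructor
  · intro k
    rw [hdγ]
    show psum γ k ≤ psum B k
    rcases le_or_gt k d with hkd | hkd
    swap
    · have h1 : psum γ k = ∑ i, α i := by rw [psum_of_le γ (by omega), hsumγ]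
      have h2 : psum B k = ∑ i, α i := by rw [psum_of_le B (by omega), hBsum, ← htot]
      rw [h1, h2]
    have L2 : ∀ k, k ≤ d → ∃ j, j ≤ k ∧ psum γ k = psum A j + ((k - j : ℕ) : ℝ) * c ∧
        ∀ i : Fin d, j ≤ (i : ℕ) → (i : ℕ) < k → A i ≤ c := by
      intro k
      induction k with
      | zero =>
        intro _
        refine ⟨0, le_rfl, ?_, fun i h1 h2 => absurd h2 (by omega)⟩
        rw [psum_zero, psum_zero]
        norm_num
      | succ k ih =>
        intro hk1
        obtain ⟨j, hjk, heq, hinv⟩ := ih (by omega)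
        have hkd' : k < d := by omega
        rcases le_or_gt (A ⟨k, hkd'⟩) c with hA1 | hA1
        · refine ⟨j, by omega, ?_, ?_⟩
          · rw [psum_succ γ hkd', heq, hγ ⟨k, hkd'⟩]
            have : max (A ⟨k, hkd'⟩) c = c := max_eq_right hA1
            rw [this, show (k + 1 - j) = (k - j) + 1 by omega]
            push_cast; ring
          · intro i h1 h2
            rcases Nat.lt_or_ge (i : ℕ) k with h | h
            · exact hinv i h1 h
            · have : i = ⟨k, hkd'⟩ := Fin.ext (show (i : ℕ) = k by omega)
              rw [this]; exact hA1
        · have hk1' : k - 1 < d := by omega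
          have hjk' : j = k := by
            by_contra hne
            have hb1 : j ≤ ((⟨k - 1, hk1'⟩ : Fin d) : ℕ) := by
              show j ≤ k - 1; omega
            have hb2 : ((⟨k - 1, hk1'⟩ : Fin d) : ℕ) < k := by
              show k - 1 < k; omega
            have h1 := hinv ⟨k - 1, hk1'⟩ hb1 hb2
            have hle : (⟨k - 1, hk1'⟩ : Fin d) ≤ ⟨k, hkd'⟩ := by
              rw [Fin.le_def]; show k - 1 ≤ k; omega
            have h2 := hAanti hle
            linarith
          rw [hjk'] at heq
          refine ⟨k + 1, le_rfl, ?_, fun i h1 h2 => absurd h2 (by omega)⟩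
          rw [psum_succ γ hkd', heq, hγ ⟨k, hkd'⟩]
          have hmx : max (A ⟨k, hkd'⟩) c = A ⟨k, hkd'⟩ := max_eq_left (le_of_lt hA1)
          rw [hmx, psum_succ A hkd']
          simp
    obtain ⟨j, hjk, heq, -⟩ := L2 k hkd
    have hAj : psum A j = psum α j := psum_castLE hd α (le_trans hjk hkd)
    rcases Nat.eq_zero_or_pos k with hk0 | hk0
    · subst hk0
      have hj0 : j = 0 := by omega
      subst hj0
      rw [heq]
      simp [psum_zero]
    rcases le_or_gt c (B ⟨k - 1, by omega⟩) with hcB | hcB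
    · have hcle : ∀ i : Fin d, (i : ℕ) < j + (k - j) → c ≤ B i := by
        intro i hi
        refine le_trans hcB (hBanti ?_)
        rw [Fin.le_def]; show (i : ℕ) ≤ k - 1; omega
      have h1 := psum_ge B c j (k - j) (by omega) hcle
      rw [show j + (k - j) = k by omega] at h1
      have h2 := hαB j
      rw [heq, hAj]
      linarith
    · have hcge : ∀ i : Fin d, k ≤ (i : ℕ) → B i ≤ c := by
        intro i hi
        refine le_trans (hBanti ?_) (le_of_lt hcB)
        rw [Fin.le_def]; show k - 1 ≤ (i : ℕ); omega
      have h3 := psum_le B c k (d - k) (by omega) hcge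
      rw [show k + (d - k) = d by omega, psum_of_le B le_rfl, hBsum, ← htot] at h3
      have h4 := key j (by omega)
      have hcast : ((d - j : ℕ) : ℝ) = ((d - k : ℕ) : ℝ) + ((k - j : ℕ) : ℝ) := by
        have : (d - j) = (d - k) + (k - j) := by omega
        rw [this]; push_cast; ring
      rw [heq]
      linarith [hcast ▸ h4]
  · exact hsumγ.trans htot
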